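/- arXiv:1802.07510 — 3 statements merged into one kernel-verified Lean document; each statement's English description precedes it below -/
import Mathlib

section
/- Let G be a weighted graph on N vertices with combinatorial Laplacian L, let μ be a finitely supported probability distribution on the set of contracted matchings of G with edge-contraction probabilities q_{ij}, and let x ∈ ℝ^N be a unit eigenvector of L with eigenvalue λ. If λ ≤ (d_i + d_j + 2 W(i,j))/4 for every edge {i,j} of G, then E_{E_F ∼ μ}[ xᵀ Π_F L Π_F x ] − λ ≤ (λ/4) · max_{{i,j} ∈ E} { q_{ij} (d_i + d_j + 2 W(i,j) − 4λ) / W(i,j) }, where the maximum runs over the edges of G. -/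
open Matrix

/-- The combinatorial Laplacian `L = D - W`. -/
def lap {N : ℕ} (W : Matrix (Fin N) (Fin N) ℝ) : Matrix (Fin N) (Fin N) ℝ :=
  Matrix.diagonal (fun i => ∑ j, W i j) - W

/-- `W` is the weight matrix of a weighted graph: symmetric, nonnegative, zero diagonal. -/
def IsWeightedGraph {N : ℕ} (W : Matrix (Fin N) (Fin N) ℝ) : Prop :=
  (∀ i j, W i j = W j i) ∧ (∀ i j, 0 ≤ W i j) ∧ (∀ i, W i i = 0)

/-- A contracted matching of the weighted graph given by `W`: a finite set of edges
(each recorded once, as an ordered pair `(i,j)` with `W i j > 0` and `i ≠ j`) such that for any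
two distinct edges `{i,j}`, `{p,q}` all of `W i p`, `W i q`, `W j p`, `W j q` vanish
(in particular the edges are vertex-disjoint, and no vertex of one edge is adjacent to a vertex
of another one). -/
def IsContractedMatching {N : ℕ} (W : Matrix (Fin N) (Fin N) ℝ)
    (EF : Finset (Fin N × Fin N)) : Prop :=
  (∀ e ∈ EF, e.1 ≠ e.2 ∧ 0 < W e.1 e.2) ∧
  (∀ e ∈ EF, ∀ e' ∈ EF, e ≠ e' →
    W e.1 e'.1 = 0 ∧ W e.1 e'.2 = 0 ∧ W e.2 e'.1 = 0 ∧ W e.2 e'.2 = 0)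

open scoped Classical in
/-- The averaging projection `Π_F` associated with a (vertex-disjoint) set of edges `E_F`:
`(Π_F x)(i) = (Π_F x)(j) = (x(i)+x(j))/2` for every `{i,j} ∈ E_F`, and `(Π_F x)(ℓ) = x(ℓ)` for
every vertex `ℓ` not incident to an edge of `E_F`. -/
noncomputable def avgProj {N : ℕ} (EF : Finset (Fin N × Fin N)) :
    Matrix (Fin N) (Fin N) ℝ :=
  Matrix.of fun a b =>
    if a = b then (if ∃ e ∈ EF, a = e.1 ∨ a = e.2 then (1 : ℝ) / 2 else 1)
    else if (a, b) ∈ EF ∨ (b, a) ∈ EF then 1 / 2 else 0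

open scoped Classical in
/-- Given a finitely supported distribution on contracted matchings, described by a finite
support `Ω` and a weight function `p`, the edge-contraction probability
`q_{ij} = μ({E_F : {i,j} ∈ E_F})` of the (unordered) edge `{i,j}`. -/
noncomputable def edgeProb {N : ℕ} (Ω : Finset (Finset (Fin N × Fin N)))
    (p : Finset (Fin N × Fin N) → ℝ) (i j : Fin N) : ℝ :=
  ∑ F ∈ Ω.filter (fun F => (i, j) ∈ F ∨ (j, i) ∈ F), p F

section Aux
variable {N : ℕ}

/-- the signed indicator vector of an edge -/
def ev (e : Fin N × Fin N) : Fin N → ℝ :=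
  fun a => (if a = e.1 then 1 else 0) - (if a = e.2 then 1 else 0)

lemma dot_sumv (u : Fin N → ℝ) {ι : Type*} (s : Finset ι) (f : ι → Fin N → ℝ) :
    u ⬝ᵥ (∑ e ∈ s, f e) = ∑ e ∈ s, u ⬝ᵥ f e := by
  simp only [dotProduct, Finset.sum_apply, Finset.mul_sum]
  exact Finset.sum_comm

lemma sumv_dot (u : Fin N → ℝ) {ι : Type*} (s : Finset ι) (f : ι → Fin N → ℝ) :
    (∑ e ∈ s, f e) ⬝ᵥ u = ∑ e ∈ s, f e ⬝ᵥ u := by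
  simp only [dotProduct, Finset.sum_apply, Finset.sum_mul]
  exact Finset.sum_comm

lemma mulVec_sumv (M : Matrix (Fin N) (Fin N) ℝ) {ι : Type*} (s : Finset ι)
    (f : ι → Fin N → ℝ) : M *ᵥ (∑ e ∈ s, f e) = ∑ e ∈ s, M *ᵥ f e := by
  funext i
  simp only [mulVec, dotProduct, Finset.sum_apply, Finset.mul_sum]
  exact Finset.sum_comm

lemma mulVec_ev (M : Matrix (Fin N) (Fin N) ℝ) (e : Fin N × Fin N) :
    M *ᵥ ev e = fun i => M i e.1 - M i e.2 := by
  funext i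
  simp only [mulVec, dotProduct, ev, mul_sub, mul_ite, mul_one, mul_zero,
    Finset.sum_sub_distrib, Finset.sum_ite_eq', Finset.mem_univ, if_true]

lemma dot_ev (w : Fin N → ℝ) (e : Fin N × Fin N) : ev e ⬝ᵥ w = w e.1 - w e.2 := by
  simp only [dotProduct, ev, sub_mul, ite_mul, one_mul, zero_mul,
    Finset.sum_sub_distrib, Finset.sum_ite_eq, Finset.sum_ite_eq', Finset.mem_univ, if_true]

lemma matching_unique {W : Matrix (Fin N) (Fin N) ℝ} (hW : IsWeightedGraph W)
    {F : Finset (Fin N × Fin N)} (hF : IsContractedMatching W F)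
    {a : Fin N} {e e' : Fin N × Fin N} (he : e ∈ F) (he' : e' ∈ F)
    (ha : a = e.1 ∨ a = e.2) (ha' : a = e'.1 ∨ a = e'.2) : e = e' := by
  by_contra h
  obtain ⟨h1, h2, h3, h4⟩ := hF.2 e he e' he' h
  have hpos := (hF.1 e' he').2
  have hz : W e'.1 e'.2 = 0 ∨ W e'.2 e'.1 = 0 := by
    rcases ha with h1' | h1' <;> rcases ha' with h2' | h2'
    · left; rw [← h1', h2'] at h2; exact h2
    · right; rw [← h1', h2'] at h1; exact h1
    · left; rw [← h1', h2'] at h4; exact h4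
    · right; rw [← h1', h2'] at h3; exact h3
  rcases hz with hz | hz
  · rw [hz] at hpos; exact lt_irrefl 0 hpos
  · rw [hW.1 e'.1 e'.2, hz] at hpos; exact lt_irrefl 0 hpos
end Aux

section Aux2
variable {N : ℕ}

open scoped Classical in
lemma avgProj_entry_matched1 {W : Matrix (Fin N) (Fin N) ℝ} (hW : IsWeightedGraph W)
    {F : Finset (Fin N × Fin N)} (hF : IsContractedMatching W F)
    {a : Fin N} {e₀ : Fin N × Fin N} (he₀ : e₀ ∈ F) (h1 : a = e₀.1) (b : Fin N) :
    avgProj F a b = (if b = a then (1:ℝ)/2 else 0) + (if b = e₀.2 then (1:ℝ)/2 else 0) := by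
  have hne := (hF.1 e₀ he₀).1
  unfold avgProj
  simp only [Matrix.of_apply]
  by_cases hb : a = b
  · subst hb
    rw [if_pos rfl, if_pos ⟨e₀, he₀, Or.inl h1⟩, if_pos rfl, if_neg, add_zero]
    exact fun hbe => hne (h1.symm.trans hbe)
  · rw [if_neg hb]
    by_cases hmem : (a, b) ∈ F ∨ (b, a) ∈ F
    · have hb2 : b = e₀.2 := by
        rcases hmem with hm | hm
        · have he : (a, b) = e₀ :=
            matching_unique hW hF hm he₀ (Or.inl rfl) (Or.inl h1)
          exact congrArg Prod.snd he
        · have he : (b, a) = e₀ :=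
            matching_unique hW hF hm he₀ (Or.inr rfl) (Or.inl h1)
          exact absurd (hne (h1.symm.trans (congrArg Prod.snd he))) not_false
      rw [if_pos hmem, if_neg (fun hba : b = a => hb hba.symm), if_pos hb2, zero_add]
    · rw [if_neg hmem, if_neg (fun hba : b = a => hb hba.symm), if_neg, add_zero]
      intro hb2
      have hpe : (a, b) = e₀ := Prod.ext h1 hb2
      exact hmem (Or.inl (hpe.symm ▸ he₀))

open scoped Classical in
lemma avgProj_entry_matched2 {W : Matrix (Fin N) (Fin N) ℝ} (hW : IsWeightedGraph W)
    {F : Finset (Fin N × Fin N)} (hF : IsContractedMatching W F)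
    {a : Fin N} {e₀ : Fin N × Fin N} (he₀ : e₀ ∈ F) (h1 : a = e₀.2) (b : Fin N) :
    avgProj F a b = (if b = a then (1:ℝ)/2 else 0) + (if b = e₀.1 then (1:ℝ)/2 else 0) := by
  have hne := (hF.1 e₀ he₀).1
  unfold avgProj
  simp only [Matrix.of_apply]
  by_cases hb : a = b
  · subst hb
    rw [if_pos rfl, if_pos ⟨e₀, he₀, Or.inr h1⟩, if_pos rfl, if_neg, add_zero]
    exact fun hbe => hne (hbe.symm.trans h1)
  · rw [if_neg hb]
    by_cases hmem : (a, b) ∈ F ∨ (b, a) ∈ F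
    · have hb2 : b = e₀.1 := by
        rcases hmem with hm | hm
        · have he : (a, b) = e₀ :=
            matching_unique hW hF hm he₀ (Or.inl rfl) (Or.inr h1)
          exact absurd (hne ((congrArg Prod.fst he).symm.trans h1)) not_false
        · have he : (b, a) = e₀ :=
            matching_unique hW hF hm he₀ (Or.inr rfl) (Or.inr h1)
          exact congrArg Prod.fst he
      rw [if_pos hmem, if_neg (fun hba : b = a => hb hba.symm), if_pos hb2, zero_add]
    · rw [if_neg hmem, if_neg (fun hba : b = a => hb hba.symm), if_neg, add_zero]
      intro hb2
      exact hmem (Or.inr (by rwa [show (b, a) = e₀ from Prod.ext hb2 h1]))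

open scoped Classical in
lemma avgProj_entry_unmatched {F : Finset (Fin N × Fin N)}
    {a : Fin N} (h : ¬ ∃ e ∈ F, a = e.1 ∨ a = e.2) (b : Fin N) :
    avgProj F a b = (if b = a then (1:ℝ) else 0) := by
  unfold avgProj
  simp only [Matrix.of_apply]
  by_cases hb : a = b
  · subst hb; rw [if_pos rfl, if_neg h, if_pos rfl]
  · rw [if_neg hb, if_neg (fun hba : b = a => hb hba.symm), if_neg]
    intro hmem
    rcases hmem with hm | hm
    · exact h ⟨(a, b), hm, Or.inl rfl⟩
    · exact h ⟨(b, a), hm, Or.inr rfl⟩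

lemma avgProj_mulVec {W : Matrix (Fin N) (Fin N) ℝ} (hW : IsWeightedGraph W)
    {F : Finset (Fin N × Fin N)} (hF : IsContractedMatching W F) (x : Fin N → ℝ) :
    avgProj F *ᵥ x = x - ∑ e ∈ F, ((x e.1 - x e.2) / 2) • ev e := by
  classical
  funext a
  have hL : (avgProj F *ᵥ x) a = ∑ b, avgProj F a b * x b := rfl
  have hR : (x - ∑ e ∈ F, ((x e.1 - x e.2) / 2) • ev e) a
      = x a - ∑ e ∈ F, ((x e.1 - x e.2) / 2) * ev e a := by
    simp [Finset.sum_apply]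
  rw [hL, hR]
  by_cases h : ∃ e ∈ F, a = e.1 ∨ a = e.2
  · obtain ⟨e₀, he₀, ha⟩ := h
    have hne := (hF.1 e₀ he₀).1
    have hsingle : ∑ e ∈ F, ((x e.1 - x e.2) / 2) * ev e a
        = ((x e₀.1 - x e₀.2) / 2) * ev e₀ a := by
      refine Finset.sum_eq_single_of_mem e₀ he₀ (fun e he hne' => ?_)
      have h1 : a ≠ e.1 := fun hh => hne' (matching_unique hW hF he he₀ (Or.inl hh) ha)
      have h2 : a ≠ e.2 := fun hh => hne' (matching_unique hW hF he he₀ (Or.inr hh) ha)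
      simp [ev, h1, h2]
    rw [hsingle]
    rcases ha with h1 | h1
    · have ha2 : a ≠ e₀.2 := fun hh => hne (h1.symm.trans hh)
      have hev : ev e₀ a = 1 := by simp [ev, if_pos h1, if_neg ha2]
      have hs : ∑ b, avgProj F a b * x b
          = ∑ b, ((if b = a then (1:ℝ)/2 else 0) + (if b = e₀.2 then (1:ℝ)/2 else 0)) * x b :=
        Finset.sum_congr rfl fun b _ => by rw [avgProj_entry_matched1 hW hF he₀ h1 b]
      rw [hs, hev]
      have hs2 : ∑ b, ((if b = a then (1:ℝ)/2 else 0) + (if b = e₀.2 then (1:ℝ)/2 else 0)) * x b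
          = (1/2) * x a + (1/2) * x e₀.2 := by
        simp [add_mul, ite_mul, zero_mul, Finset.sum_add_distrib, Finset.sum_ite_eq',
          Finset.mem_univ]
      rw [hs2, h1]; ring
    · have ha1 : a ≠ e₀.1 := fun hh => hne (hh.symm.trans h1)
      have hev : ev e₀ a = -1 := by simp [ev, if_pos h1, if_neg ha1]
      have hs : ∑ b, avgProj F a b * x b
          = ∑ b, ((if b = a then (1:ℝ)/2 else 0) + (if b = e₀.1 then (1:ℝ)/2 else 0)) * x b :=
        Finset.sum_congr rfl fun b _ => by rw [avgProj_entry_matched2 hW hF he₀ h1 b]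
      rw [hs, hev]
      have hs2 : ∑ b, ((if b = a then (1:ℝ)/2 else 0) + (if b = e₀.1 then (1:ℝ)/2 else 0)) * x b
          = (1/2) * x a + (1/2) * x e₀.1 := by
        simp [add_mul, ite_mul, zero_mul, Finset.sum_add_distrib, Finset.sum_ite_eq',
          Finset.mem_univ]
      rw [hs2, h1]; ring
  · have h' := h
    have hz : ∀ e ∈ F, ((x e.1 - x e.2) / 2) * ev e a = 0 := by
      intro e he
      have h1 : a ≠ e.1 := fun hh => h' ⟨e, he, Or.inl hh⟩
      have h2 : a ≠ e.2 := fun hh => h' ⟨e, he, Or.inr hh⟩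
      simp [ev, h1, h2]
    rw [Finset.sum_eq_zero hz, sub_zero]
    simp [avgProj_entry_unmatched h']

end Aux2

section Aux3
variable {N : ℕ}

lemma lap_symm {W : Matrix (Fin N) (Fin N) ℝ} (hW : IsWeightedGraph W) (i j : Fin N) :
    lap W i j = lap W j i := by
  unfold lap
  by_cases h : i = j
  · subst h; rfl
  · simp [Matrix.sub_apply, Matrix.diagonal_apply, h, Ne.symm h, hW.1 i j]

lemma lap_off {W : Matrix (Fin N) (Fin N) ℝ} {i j : Fin N} (h : i ≠ j) :
    lap W i j = -W i j := by
  simp [lap, Matrix.sub_apply, Matrix.diagonal_apply, h]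

lemma lap_diag {W : Matrix (Fin N) (Fin N) ℝ} (hW : IsWeightedGraph W) (i : Fin N) :
    lap W i i = ∑ ℓ, W i ℓ := by
  simp [lap, Matrix.sub_apply, Matrix.diagonal_apply, hW.2.2 i]

lemma dot_lap_comm {W : Matrix (Fin N) (Fin N) ℝ} (hW : IsWeightedGraph W)
    (u v : Fin N → ℝ) : u ⬝ᵥ (lap W *ᵥ v) = (lap W *ᵥ u) ⬝ᵥ v := by
  calc u ⬝ᵥ (lap W *ᵥ v) = ∑ i, ∑ j, u i * (lap W i j * v j) := by
        simp [dotProduct, mulVec, Finset.mul_sum]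
    _ = ∑ j, ∑ i, u i * (lap W i j * v j) := Finset.sum_comm
    _ = ∑ j, (∑ i, lap W j i * u i) * v j := by
        refine Finset.sum_congr rfl fun j _ => ?_
        rw [Finset.sum_mul]
        refine Finset.sum_congr rfl fun i _ => ?_
        rw [lap_symm hW i j]; ring
    _ = (lap W *ᵥ u) ⬝ᵥ v := by simp [dotProduct, mulVec]

lemma B_ev_ev_same {W : Matrix (Fin N) (Fin N) ℝ} (hW : IsWeightedGraph W)
    {e : Fin N × Fin N} (he : e.1 ≠ e.2) :
    ev e ⬝ᵥ (lap W *ᵥ ev e)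
      = (∑ ℓ, W e.1 ℓ) + (∑ ℓ, W e.2 ℓ) + 2 * W e.1 e.2 := by
  rw [mulVec_ev, dot_ev]
  rw [lap_diag hW, lap_diag hW, lap_off he, lap_off (Ne.symm he), hW.1 e.2 e.1]
  ring

lemma B_ev_ev_cross {W : Matrix (Fin N) (Fin N) ℝ} (hW : IsWeightedGraph W)
    {F : Finset (Fin N × Fin N)} (hF : IsContractedMatching W F)
    {e e' : Fin N × Fin N} (he : e ∈ F) (he' : e' ∈ F) (hne : e ≠ e') :
    ev e ⬝ᵥ (lap W *ᵥ ev e') = 0 := by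
  obtain ⟨h1, h2, h3, h4⟩ := hF.2 e he e' he' hne
  have d11 : e.1 ≠ e'.1 := fun h =>
    hne (matching_unique hW hF he he' (Or.inl rfl) (Or.inl h))
  have d12 : e.1 ≠ e'.2 := fun h =>
    hne (matching_unique hW hF he he' (Or.inl rfl) (Or.inr h))
  have d21 : e.2 ≠ e'.1 := fun h =>
    hne (matching_unique hW hF he he' (Or.inr rfl) (Or.inl h))
  have d22 : e.2 ≠ e'.2 := fun h =>
    hne (matching_unique hW hF he he' (Or.inr rfl) (Or.inr h))
  rw [mulVec_ev, dot_ev, lap_off d11, lap_off d12, lap_off d21, lap_off d22,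
    h1, h2, h3, h4]
  ring

end Aux3

section Aux4
variable {N : ℕ}

lemma quadform_eq {W : Matrix (Fin N) (Fin N) ℝ} (hW : IsWeightedGraph W)
    {F : Finset (Fin N × Fin N)} (hF : IsContractedMatching W F)
    {x : Fin N → ℝ} {lam : ℝ}
    (heig : lap W *ᵥ x = lam • x) (hunit : x ⬝ᵥ x = 1) :
    (avgProj F *ᵥ x) ⬝ᵥ (lap W *ᵥ (avgProj F *ᵥ x)) =
      lam + ∑ e ∈ F, ((x e.1 - x e.2) / 2) ^ 2 *
        ((∑ ℓ, W e.1 ℓ) + (∑ ℓ, W e.2 ℓ) + 2 * W e.1 e.2 - 4 * lam) := by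
  set t : Fin N × Fin N → ℝ := fun e => (x e.1 - x e.2) / 2 with ht
  set s : Fin N → ℝ := ∑ e ∈ F, t e • ev e with hs
  rw [avgProj_mulVec hW hF x]
  rw [Matrix.mulVec_sub, dotProduct_sub, sub_dotProduct,
    sub_dotProduct]
  have hxLx : x ⬝ᵥ (lap W *ᵥ x) = lam := by
    rw [heig, dotProduct_smul, hunit]; simp
  have hsLx : s ⬝ᵥ (lap W *ᵥ x) = ∑ e ∈ F, 2 * lam * t e ^ 2 := by
    rw [hs, sumv_dot]
    refine Finset.sum_congr rfl fun e he => ?_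
    rw [smul_dotProduct, heig, dot_ev]
    simp only [Pi.smul_apply, smul_eq_mul, ht]
    ring
  have hxLs : x ⬝ᵥ (lap W *ᵥ s) = ∑ e ∈ F, 2 * lam * t e ^ 2 := by
    rw [dot_lap_comm hW, dotProduct_comm, hsLx.symm]
  have hsLs : s ⬝ᵥ (lap W *ᵥ s) = ∑ e ∈ F, t e ^ 2 *
      ((∑ ℓ, W e.1 ℓ) + (∑ ℓ, W e.2 ℓ) + 2 * W e.1 e.2) := by
    rw [hs, sumv_dot]
    refine Finset.sum_congr rfl fun e he => ?_
    have hone : ∀ e' ∈ F, e' ≠ e → ev e ⬝ᵥ (lap W *ᵥ (t e' • ev e')) = 0 := by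
      intro e' he' hne
      rw [Matrix.mulVec_smul, dotProduct_smul,
        B_ev_ev_cross hW hF he he' (Ne.symm hne), smul_zero]
    have hinner : ∑ e' ∈ F, ev e ⬝ᵥ (lap W *ᵥ (t e' • ev e'))
        = t e * ((∑ ℓ, W e.1 ℓ) + (∑ ℓ, W e.2 ℓ) + 2 * W e.1 e.2) := by
      rw [Finset.sum_eq_single_of_mem e he hone, Matrix.mulVec_smul,
        dotProduct_smul, B_ev_ev_same hW (hF.1 e he).1, smul_eq_mul]
    rw [smul_dotProduct, mulVec_sumv, dot_sumv, hinner, smul_eq_mul]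
    ring
  rw [hxLx, hsLx, hxLs, hsLs]
  have hC : ∑ e ∈ F, ((x e.1 - x e.2) / 2) ^ 2 *
        ((∑ ℓ, W e.1 ℓ) + (∑ ℓ, W e.2 ℓ) + 2 * W e.1 e.2 - 4 * lam)
      = (∑ e ∈ F, t e ^ 2 * ((∑ ℓ, W e.1 ℓ) + (∑ ℓ, W e.2 ℓ) + 2 * W e.1 e.2))
        - 2 * (∑ e ∈ F, 2 * lam * t e ^ 2) := by
    rw [Finset.mul_sum, ← Finset.sum_sub_distrib]
    refine Finset.sum_congr rfl fun e he => ?_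
    simp only [ht]
    ring
  rw [hC]
  ring

end Aux4

section Aux5
variable {N : ℕ}

lemma pair_sum (g : Fin N × Fin N → ℝ) (hdiag : ∀ i, g (i, i) = 0) :
    ∑ e : Fin N × Fin N, g e
      = ∑ e ∈ Finset.univ.filter (fun e : Fin N × Fin N => e.1 < e.2),
          (g e + g (e.2, e.1)) := by
  classical
  rw [Finset.sum_add_distrib]
  have h1 : ∑ e ∈ Finset.univ.filter (fun e : Fin N × Fin N => e.1 < e.2), g (e.2, e.1)
      = ∑ e ∈ Finset.univ.filter (fun e : Fin N × Fin N => e.2 < e.1), g e := by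
    refine Finset.sum_nbij' (fun e => (e.2, e.1)) (fun e => (e.2, e.1)) ?_ ?_ ?_ ?_ ?_
    · intro a ha; simp only [Finset.mem_filter, Finset.mem_univ, true_and] at ha ⊢; exact ha
    · intro a ha; simp only [Finset.mem_filter, Finset.mem_univ, true_and] at ha ⊢; exact ha
    · intro a _; rfl
    · intro a _; rfl
    · intro a _; rfl
  have h2 : ∑ e ∈ Finset.univ.filter (fun e : Fin N × Fin N => e.2 < e.1), g e
      = ∑ e ∈ Finset.univ.filter (fun e : Fin N × Fin N => ¬ e.1 < e.2), g e := by
    refine Finset.sum_subset ?_ ?_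
    · intro e he
      simp only [Finset.mem_filter, Finset.mem_univ, true_and] at he ⊢
      exact lt_asymm he
    · intro e he hne
      simp only [Finset.mem_filter, Finset.mem_univ, true_and] at he hne
      have heq : e.1 = e.2 := le_antisymm (not_lt.1 hne) (not_lt.1 he)
      have he' : e = (e.2, e.1) := Prod.ext heq heq.symm
      rw [he', ← heq]
      exact hdiag e.1
  rw [h1, h2, Finset.sum_filter_add_sum_filter_not]

lemma edgeProb_split {W : Matrix (Fin N) (Fin N) ℝ}
    (Ω : Finset (Finset (Fin N × Fin N))) (p : Finset (Fin N × Fin N) → ℝ)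
    (hmatch : ∀ F ∈ Ω, IsContractedMatching W F) (i j : Fin N) (hij : i ≠ j) :
    edgeProb Ω p i j
      = (∑ F ∈ Ω.filter (fun F => (i, j) ∈ F), p F)
        + (∑ F ∈ Ω.filter (fun F => (j, i) ∈ F), p F) := by
  classical
  unfold edgeProb
  rw [Finset.sum_filter, Finset.sum_filter, Finset.sum_filter, ← Finset.sum_add_distrib]
  refine Finset.sum_congr rfl fun F hF => ?_
  have hnot : ¬ ((i, j) ∈ F ∧ (j, i) ∈ F) := by
    rintro ⟨h1, h2⟩
    have hne : ((i, j) : Fin N × Fin N) ≠ (j, i) := fun h =>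
      hij (congrArg Prod.fst h)
    have := ((hmatch F hF).2 (i, j) h1 (j, i) h2 hne).1
    have hpos := ((hmatch F hF).1 (i, j) h1).2
    rw [this] at hpos
    exact lt_irrefl 0 hpos
  by_cases h1 : (i, j) ∈ F
  · have h2 : (j, i) ∉ F := fun h2 => hnot ⟨h1, h2⟩
    rw [if_pos (Or.inl h1), if_pos h1, if_neg h2, add_zero]
  · by_cases h2 : (j, i) ∈ F
    · rw [if_pos (Or.inr h2), if_neg h1, if_pos h2, zero_add]
    · rw [if_neg (fun h => h.elim h1 h2), if_neg h1, if_neg h2, add_zero]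

lemma lap_quadform_pairs {W : Matrix (Fin N) (Fin N) ℝ} (hW : IsWeightedGraph W)
    (x : Fin N → ℝ) :
    x ⬝ᵥ (lap W *ᵥ x)
      = ∑ e ∈ Finset.univ.filter (fun e : Fin N × Fin N => e.1 < e.2),
          W e.1 e.2 * (x e.1 - x e.2) ^ 2 := by
  classical
  have hdot : x ⬝ᵥ (lap W *ᵥ x)
      = ∑ i, ((∑ j, W i j) * x i ^ 2 - ∑ j, W i j * x i * x j) := by
    have hmv : ∀ i, (lap W *ᵥ x) i = (∑ j, W i j) * x i - ∑ j, W i j * x j := by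
      intro i
      simp [lap, mulVec, dotProduct, Matrix.sub_apply, Matrix.diagonal_apply, sub_mul,
        Finset.sum_sub_distrib, ite_mul, zero_mul, Finset.sum_ite_eq, Finset.mem_univ]
    simp only [dotProduct, hmv]
    refine Finset.sum_congr rfl fun i _ => ?_
    rw [mul_sub, Finset.mul_sum]
    have : ∀ j, x i * (W i j * x j) = W i j * x i * x j := fun j => by ring
    simp only [this]
    ring
  have hswap : ∑ i, ∑ j, W i j * x j ^ 2 = ∑ i, (∑ j, W i j) * x i ^ 2 := by
    rw [Finset.sum_comm]
    refine Finset.sum_congr rfl fun j _ => ?_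
    rw [Finset.sum_mul]
    refine Finset.sum_congr rfl fun i _ => ?_
    rw [hW.1 j i]
  have hkey : ∑ e : Fin N × Fin N, W e.1 e.2 * (x e.1 - x e.2) ^ 2
      = 2 * (x ⬝ᵥ (lap W *ᵥ x)) := by
    rw [Fintype.sum_prod_type, hdot]
    have hexp : ∀ i, ∑ j, W i j * (x i - x j) ^ 2
        = (∑ j, W i j) * x i ^ 2 - 2 * ∑ j, W i j * x i * x j + ∑ j, W i j * x j ^ 2 := by
      intro i
      rw [Finset.sum_mul, Finset.mul_sum, ← Finset.sum_sub_distrib, ← Finset.sum_add_distrib]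
      refine Finset.sum_congr rfl fun j _ => ?_
      ring
    simp only [hexp]
    rw [Finset.sum_add_distrib, Finset.sum_sub_distrib, hswap, ← Finset.mul_sum,
      Finset.sum_sub_distrib]
    ring
  have hps := pair_sum (fun e : Fin N × Fin N => W e.1 e.2 * (x e.1 - x e.2) ^ 2)
    (fun i => by simp)
  rw [hps] at hkey
  have : ∀ e ∈ Finset.univ.filter (fun e : Fin N × Fin N => e.1 < e.2),
      W e.1 e.2 * (x e.1 - x e.2) ^ 2 + W e.2 e.1 * (x e.2 - x e.1) ^ 2
        = 2 * (W e.1 e.2 * (x e.1 - x e.2) ^ 2) := by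
    intro e _
    rw [hW.1 e.2 e.1]
    ring
  rw [Finset.sum_congr rfl this, ← Finset.mul_sum] at hkey
  linarith

end Aux5

/-- for a finitely supported probability distribution `μ` (support `Ω`, weights
`p`) on contracted matchings of `G`, and a unit eigenvector `x` of `L` with eigenvalue `λ`, if
`λ ≤ (d_i + d_j + 2 W(i,j))/4` for every edge `{i,j}` of `G`, then
`E_{E_F∼μ}[xᵀ Π_F L Π_F x] − λ
  ≤ (λ/4) · max_{{i,j} ∈ E} q_{ij} (d_i + d_j + 2 W(i,j) − 4λ) / W(i,j)`
(the maximum over the edges of `G` being expressed as a supremum). -/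
theorem expected_avgProj_laplacian_quadform_le {N : ℕ} (W : Matrix (Fin N) (Fin N) ℝ)
    (hW : IsWeightedGraph W)
    (Ω : Finset (Finset (Fin N × Fin N))) (p : Finset (Fin N × Fin N) → ℝ)
    (hmatch : ∀ F ∈ Ω, IsContractedMatching W F)
    (hp : ∀ F ∈ Ω, 0 ≤ p F) (hsum : ∑ F ∈ Ω, p F = 1)
    (x : Fin N → ℝ) (lam : ℝ)
    (heig : lap W *ᵥ x = lam • x) (hunit : x ⬝ᵥ x = 1)
    (hlam : ∀ i j : Fin N, i ≠ j → 0 < W i j →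
      lam ≤ ((∑ ℓ, W i ℓ) + (∑ ℓ, W j ℓ) + 2 * W i j) / 4) :
    (∑ F ∈ Ω, p F * ((avgProj F *ᵥ x) ⬝ᵥ (lap W *ᵥ (avgProj F *ᵥ x)))) - lam ≤
      (lam / 4) * sSup { r : ℝ | ∃ i j : Fin N, i < j ∧ 0 < W i j ∧
        r = edgeProb Ω p i j *
          ((∑ ℓ, W i ℓ) + (∑ ℓ, W j ℓ) + 2 * W i j - 4 * lam) / W i j } := by
  classical
  set S : Fin N × Fin N → ℝ :=
    fun e => (∑ ℓ, W e.1 ℓ) + (∑ ℓ, W e.2 ℓ) + 2 * W e.1 e.2 with hS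
  set c : Fin N × Fin N → ℝ :=
    fun e => ((x e.1 - x e.2) / 2) ^ 2 * (S e - 4 * lam) with hc
  set q1 : Fin N × Fin N → ℝ :=
    fun e => ∑ F ∈ Ω.filter (fun F => e ∈ F), p F with hq1
  set M : ℝ := sSup { r : ℝ | ∃ i j : Fin N, i < j ∧ 0 < W i j ∧
      r = edgeProb Ω p i j * ((∑ ℓ, W i ℓ) + (∑ ℓ, W j ℓ) + 2 * W i j - 4 * lam) / W i j }
    with hM
  set Elt : Finset (Fin N × Fin N) :=
    Finset.univ.filter (fun e : Fin N × Fin N => e.1 < e.2) with hElt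
  have hxLx : x ⬝ᵥ (lap W *ᵥ x) = lam := by
    rw [heig, dotProduct_smul, hunit]; simp
  -- step 2: LHS - lam = D
  have hstep2 : (∑ F ∈ Ω, p F * ((avgProj F *ᵥ x) ⬝ᵥ (lap W *ᵥ (avgProj F *ᵥ x)))) - lam
      = ∑ F ∈ Ω, p F * ∑ e ∈ F, c e := by
    have h1 : ∀ F ∈ Ω, p F * ((avgProj F *ᵥ x) ⬝ᵥ (lap W *ᵥ (avgProj F *ᵥ x)))
        = p F * lam + p F * ∑ e ∈ F, c e := by
      intro F hF
      rw [quadform_eq hW (hmatch F hF) heig hunit, mul_add]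
    rw [Finset.sum_congr rfl h1, Finset.sum_add_distrib, ← Finset.sum_mul, hsum, one_mul]
    ring
  -- step 3: D = ∑ over pairs of q1 e * c e
  have hstep3 : ∑ F ∈ Ω, p F * ∑ e ∈ F, c e = ∑ e : Fin N × Fin N, q1 e * c e := by
    have h1 : ∀ F : Finset (Fin N × Fin N), ∑ e ∈ F, c e
        = ∑ e : Fin N × Fin N, if e ∈ F then c e else 0 := by
      intro F
      rw [Finset.sum_ite_mem, Finset.univ_inter]
    calc ∑ F ∈ Ω, p F * ∑ e ∈ F, c e
        = ∑ F ∈ Ω, ∑ e : Fin N × Fin N, p F * (if e ∈ F then c e else 0) := by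
          refine Finset.sum_congr rfl fun F _ => ?_
          rw [h1 F, Finset.mul_sum]
      _ = ∑ e : Fin N × Fin N, ∑ F ∈ Ω, p F * (if e ∈ F then c e else 0) :=
          Finset.sum_comm
      _ = ∑ e : Fin N × Fin N, q1 e * c e := by
          refine Finset.sum_congr rfl fun e _ => ?_
          have h2 : ∀ F, p F * (if e ∈ F then c e else 0)
              = (if e ∈ F then p F else 0) * c e := by
            intro F; by_cases h : e ∈ F <;> simp [h]
          simp only [h2]
          rw [← Finset.sum_mul]
          simp only [hq1]
          rw [Finset.sum_filter]
  -- step 4+5: fold to edges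
  have hstep4 : ∑ e : Fin N × Fin N, q1 e * c e
      = ∑ e ∈ Elt, edgeProb Ω p e.1 e.2 * c e := by
    rw [pair_sum (fun e => q1 e * c e) (fun i => by simp [hc])]
    refine Finset.sum_congr rfl fun e he => ?_
    have helt : e.1 < e.2 := by
      rw [hElt] at he
      simpa using (Finset.mem_filter.1 he).2
    have hcsym : c (e.2, e.1) = c e := by
      simp only [hc, hS, hW.1 e.2 e.1]
      ring
    have hprob : edgeProb Ω p e.1 e.2 = q1 (e.1, e.2) + q1 (e.2, e.1) := by
      rw [edgeProb_split Ω p hmatch e.1 e.2 (ne_of_lt helt)]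
    rw [hcsym, hprob]
    have : ((e.1, e.2) : Fin N × Fin N) = e := rfl
    rw [this]
    ring
  -- the quadratic-form identity over edges
  have hquad : ∑ e ∈ Elt, W e.1 e.2 * (x e.1 - x e.2) ^ 2 = lam := by
    rw [← lap_quadform_pairs hW x, hxLx]
  -- boundedness of the sup set
  have hbdd : BddAbove { r : ℝ | ∃ i j : Fin N, i < j ∧ 0 < W i j ∧
      r = edgeProb Ω p i j * ((∑ ℓ, W i ℓ) + (∑ ℓ, W j ℓ) + 2 * W i j - 4 * lam) / W i j } := by
    refine Set.Finite.bddAbove (Set.Finite.subset (Set.finite_range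
      (fun e : Fin N × Fin N =>
        edgeProb Ω p e.1 e.2 * (S e - 4 * lam) / W e.1 e.2)) ?_)
    rintro r ⟨i, j, hij, hpos, rfl⟩
    exact ⟨(i, j), rfl⟩
  -- per-edge bound
  have hstep5 : ∀ e ∈ Elt, edgeProb Ω p e.1 e.2 * c e
      ≤ (M / 4) * (W e.1 e.2 * (x e.1 - x e.2) ^ 2) := by
    intro e he
    have helt : e.1 < e.2 := by
      rw [hElt] at he
      simpa using (Finset.mem_filter.1 he).2
    by_cases hpos : 0 < W e.1 e.2
    · have hmem : edgeProb Ω p e.1 e.2 * (S e - 4 * lam) / W e.1 e.2 ∈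
          { r : ℝ | ∃ i j : Fin N, i < j ∧ 0 < W i j ∧
            r = edgeProb Ω p i j *
              ((∑ ℓ, W i ℓ) + (∑ ℓ, W j ℓ) + 2 * W i j - 4 * lam) / W i j } :=
        ⟨e.1, e.2, helt, hpos, rfl⟩
      have hle : edgeProb Ω p e.1 e.2 * (S e - 4 * lam) / W e.1 e.2 ≤ M :=
        le_csSup hbdd hmem
      have hWne : W e.1 e.2 ≠ 0 := ne_of_gt hpos
      have hcancel : (edgeProb Ω p e.1 e.2 * (S e - 4 * lam) / W e.1 e.2) * W e.1 e.2
          = edgeProb Ω p e.1 e.2 * (S e - 4 * lam) := div_mul_cancel₀ _ hWne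
      have hsq : (0:ℝ) ≤ (x e.1 - x e.2) ^ 2 / 4 := by positivity
      have h6 : (edgeProb Ω p e.1 e.2 * (S e - 4 * lam) / W e.1 e.2) * W e.1 e.2 *
            ((x e.1 - x e.2) ^ 2 / 4)
          ≤ M * W e.1 e.2 * ((x e.1 - x e.2) ^ 2 / 4) := by
        refine mul_le_mul_of_nonneg_right ?_ hsq
        exact mul_le_mul_of_nonneg_right hle (le_of_lt hpos)
      rw [hcancel] at h6
      calc edgeProb Ω p e.1 e.2 * c e
          = edgeProb Ω p e.1 e.2 * (S e - 4 * lam) * ((x e.1 - x e.2) ^ 2 / 4) := by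
            rw [hc]; ring
        _ ≤ M * W e.1 e.2 * ((x e.1 - x e.2) ^ 2 / 4) := h6
        _ = (M / 4) * (W e.1 e.2 * (x e.1 - x e.2) ^ 2) := by ring
    · have hW0 : W e.1 e.2 = 0 := le_antisymm (not_lt.1 hpos) (hW.2.1 e.1 e.2)
      have hq0 : edgeProb Ω p e.1 e.2 = 0 := by
        rw [edgeProb_split Ω p hmatch e.1 e.2 (ne_of_lt helt)]
        have hz1 : ∑ F ∈ Ω.filter (fun F => (e.1, e.2) ∈ F), p F = 0 := by
          refine Finset.sum_eq_zero fun F hF => ?_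
          exfalso
          have hFm := Finset.mem_filter.1 hF
          have := ((hmatch F hFm.1).1 (e.1, e.2) hFm.2).2
          rw [hW0] at this; exact lt_irrefl 0 this
        have hz2 : ∑ F ∈ Ω.filter (fun F => (e.2, e.1) ∈ F), p F = 0 := by
          refine Finset.sum_eq_zero fun F hF => ?_
          exfalso
          have hFm := Finset.mem_filter.1 hF
          have := ((hmatch F hFm.1).1 (e.2, e.1) hFm.2).2
          rw [hW.1 e.2 e.1, hW0] at this; exact lt_irrefl 0 this
        rw [hz1, hz2, add_zero]
      rw [hq0, hW0]
      simp
  -- assemble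
  rw [hstep2, hstep3, hstep4]
  calc ∑ e ∈ Elt, edgeProb Ω p e.1 e.2 * c e
      ≤ ∑ e ∈ Elt, (M / 4) * (W e.1 e.2 * (x e.1 - x e.2) ^ 2) :=
        Finset.sum_le_sum hstep5
    _ = (M / 4) * ∑ e ∈ Elt, W e.1 e.2 * (x e.1 - x e.2) ^ 2 := by
        rw [Finset.mul_sum]
    _ = (M / 4) * lam := by rw [hquad]
    _ = (lam / 4) * M := by ring
end

section
/- Let G be a weighted graph on N vertices with combinatorial Laplacian L, let μ be a finitely supported probability distribution on the set of contracted matchings of G with edge-contraction probabilities q_{ij}, and let x ∈ ℝ^N be a unit eigenvector of L with eigenvalue λ > 0. Then for every ε > 0, μ({ E_F : ‖Π_F^⊥ x‖₂² ≥ ε λ }) ≤ (1/(2ε)) · max_{{i,j} ∈ E} { q_{ij} / W(i,j) }, where the maximum runs over the edges of G and Π_F^⊥ = I_N − Π_F. -/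
open Matrix

section aux
variable {N : ℕ} {W : Matrix (Fin N) (Fin N) ℝ} {F : Finset (Fin N × Fin N)}

lemma share_eq (hW : IsWeightedGraph W) (hF : IsContractedMatching W F)
    {e e' : Fin N × Fin N} (he : e ∈ F) (he' : e' ∈ F)
    (h : e.1 = e'.1 ∨ e.1 = e'.2 ∨ e.2 = e'.1 ∨ e.2 = e'.2) : e = e' := by
  by_contra hne
  obtain ⟨h11, h12, h21, h22⟩ := hF.2 e he e' he' hne
  have hpos := (hF.1 e' he').2
  rcases h with h | h | h | h
  · rw [h] at h12; rw [h12] at hpos; exact lt_irrefl 0 hpos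
  · rw [h] at h11; rw [hW.1 e'.1 e'.2, h11] at hpos; exact lt_irrefl 0 hpos
  · rw [h] at h22; rw [h22] at hpos; exact lt_irrefl 0 hpos
  · rw [h] at h21; rw [hW.1 e'.1 e'.2, h21] at hpos; exact lt_irrefl 0 hpos

open scoped Classical in
lemma avg_apply_edge (hW : IsWeightedGraph W) (hF : IsContractedMatching W F)
    (x : Fin N → ℝ) {a b0 : Fin N} (hab : a ≠ b0)
    (hmem : (a, b0) ∈ F ∨ (b0, a) ∈ F) :
    (avgProj F *ᵥ x) a = (x a + x b0) / 2 := by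
  have huniq : ∀ b : Fin N, ((a, b) ∈ F ∨ (b, a) ∈ F) → b = b0 := by
    intro b hb
    rcases hmem with hm | hm <;> rcases hb with hb | hb
    · have := share_eq hW hF hb hm (Or.inl rfl)
      exact congrArg Prod.snd this
    · have := share_eq hW hF hb hm (Or.inr (Or.inr (Or.inl rfl)))
      exact absurd (congrArg Prod.snd this) (by simpa using hab)
    · have := share_eq hW hF hb hm (Or.inr (Or.inl rfl))
      exact absurd (congrArg Prod.fst this) (by simpa using hab)
    · have := share_eq hW hF hb hm (Or.inr (Or.inr (Or.inr rfl)))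
      exact congrArg Prod.fst this
  have hend : ∃ e ∈ F, a = e.1 ∨ a = e.2 := by
    rcases hmem with hm | hm
    · exact ⟨_, hm, Or.inl rfl⟩
    · exact ⟨_, hm, Or.inr rfl⟩
  have : (avgProj F *ᵥ x) a = ∑ b, avgProj F a b * x b := rfl
  rw [this]
  rw [show (Finset.univ : Finset (Fin N)) = insert a {b0} ∪ (Finset.univ \ insert a {b0}) by
    simp [Finset.union_sdiff_of_subset]]
  rw [Finset.sum_union (Finset.disjoint_sdiff)]
  have h2 : ∑ b ∈ Finset.univ \ insert a {b0}, avgProj F a b * x b = 0 := by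
    apply Finset.sum_eq_zero
    intro b hb
    simp only [Finset.mem_sdiff, Finset.mem_insert, Finset.mem_singleton] at hb
    push_neg at hb
    have hba : a ≠ b := fun h => hb.2.1 h.symm
    have : avgProj F a b = 0 := by
      simp only [avgProj, Matrix.of_apply, if_neg hba]
      rw [if_neg]
      intro hor
      exact hb.2.2 (huniq b hor)
    rw [this, zero_mul]
  rw [h2, add_zero, Finset.sum_pair hab]
  have hda : avgProj F a a = 1 / 2 := by
    simp only [avgProj, Matrix.of_apply]
    rw [if_pos trivial, if_pos hend]
  have hdb : avgProj F a b0 = 1 / 2 := by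
    simp only [avgProj, Matrix.of_apply, if_neg hab, if_pos hmem]
  rw [hda, hdb]; ring

open scoped Classical in
lemma avg_apply_not (x : Fin N → ℝ) {a : Fin N}
    (ha : ¬ ∃ e ∈ F, a = e.1 ∨ a = e.2) :
    (avgProj F *ᵥ x) a = x a := by
  have : (avgProj F *ᵥ x) a = ∑ b, avgProj F a b * x b := rfl
  rw [this]
  rw [Finset.sum_eq_single a]
  · simp only [avgProj, Matrix.of_apply, if_pos trivial, if_neg ha, one_mul]
  · intro b _ hb
    have hab : a ≠ b := fun h => hb h.symm
    have : avgProj F a b = 0 := by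
      simp only [avgProj, Matrix.of_apply, if_neg hab]
      rw [if_neg]
      rintro (h | h)
      · exact ha ⟨_, h, Or.inl rfl⟩
      · exact ha ⟨_, h, Or.inr rfl⟩
    rw [this, zero_mul]
  · intro h; exact absurd (Finset.mem_univ a) h

end aux

section aux2
variable {N : ℕ} {W : Matrix (Fin N) (Fin N) ℝ} {F : Finset (Fin N × Fin N)}

open scoped Classical in
lemma perp_norm_eq (hW : IsWeightedGraph W) (hF : IsContractedMatching W F)
    (x : Fin N → ℝ) :
    ((1 - avgProj F) *ᵥ x) ⬝ᵥ ((1 - avgProj F) *ᵥ x) =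
      ∑ e ∈ F, (x e.1 - x e.2) ^ 2 / 2 := by
  set y : Fin N → ℝ := (1 - avgProj F) *ᵥ x with hy
  have hyval : ∀ a, y a = x a - (avgProj F *ᵥ x) a := by
    intro a
    rw [hy, Matrix.sub_mulVec, Matrix.one_mulVec]
    rfl
  have hzero : ∀ a, (¬ ∃ e ∈ F, a = e.1 ∨ a = e.2) → y a = 0 := by
    intro a ha
    rw [hyval, avg_apply_not x ha, sub_self]
  have hval1 : ∀ e ∈ F, y e.1 = (x e.1 - x e.2) / 2 := by
    intro e he
    rw [hyval, avg_apply_edge hW hF x (hF.1 e he).1 (Or.inl (by simpa using he))]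
    ring
  have hval2 : ∀ e ∈ F, y e.2 = (x e.2 - x e.1) / 2 := by
    intro e he
    rw [hyval, avg_apply_edge hW hF x (Ne.symm (hF.1 e he).1) (Or.inr (by simpa using he))]
    ring
  have hdot : y ⬝ᵥ y = ∑ a, y a * y a := rfl
  rw [hdot]
  have hsub : ∑ a, y a * y a = ∑ a ∈ F.biUnion (fun e => {e.1, e.2}), y a * y a := by
    symm
    apply Finset.sum_subset (Finset.subset_univ _)
    intro a _ ha
    simp only [Finset.mem_biUnion, Finset.mem_insert, Finset.mem_singleton] at ha
    push_neg at ha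
    have : ¬ ∃ e ∈ F, a = e.1 ∨ a = e.2 := by
      rintro ⟨e, he, h | h⟩
      · exact (ha e he).1 h
      · exact (ha e he).2 h
    rw [hzero a this, mul_zero]
  rw [hsub, Finset.sum_biUnion]
  · apply Finset.sum_congr rfl
    intro e he
    rw [Finset.sum_pair (hF.1 e he).1, hval1 e he, hval2 e he]
    ring
  · intro e he e' he' hne
    apply Finset.disjoint_left.2
    intro a hae hae'
    simp only [Finset.mem_insert, Finset.mem_singleton] at hae hae'
    apply hne
    apply share_eq hW hF he he'
    rcases hae with h | h <;> rcases hae' with h' | h'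
    · exact Or.inl (h ▸ h' ▸ rfl)
    · exact Or.inr (Or.inl (h ▸ h' ▸ rfl))
    · exact Or.inr (Or.inr (Or.inl (h ▸ h' ▸ rfl)))
    · exact Or.inr (Or.inr (Or.inr (h ▸ h' ▸ rfl)))

open scoped Classical in
lemma fold_sum (hW : IsWeightedGraph W) (f : Fin N × Fin N → ℝ)
    (h0 : ∀ e : Fin N × Fin N, f e ≠ 0 → e.1 ≠ e.2 ∧ 0 < W e.1 e.2) :
    ∑ e : Fin N × Fin N, f e =
      ∑ e ∈ Finset.univ.filter (fun e : Fin N × Fin N => e.1 < e.2 ∧ 0 < W e.1 e.2),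
        (f e + f (e.2, e.1)) := by
  set T := Finset.univ.filter (fun e : Fin N × Fin N => e.1 < e.2 ∧ 0 < W e.1 e.2) with hT
  set T' := Finset.univ.filter (fun e : Fin N × Fin N => e.2 < e.1 ∧ 0 < W e.1 e.2) with hT'
  have hdisj : Disjoint T T' := by
    rw [Finset.disjoint_left]
    intro e he he'
    simp only [hT, hT', Finset.mem_filter] at he he'
    exact absurd he'.2.1 (not_lt.2 (le_of_lt he.2.1))
  have hswap : ∑ e ∈ T', f e = ∑ e ∈ T, f (e.2, e.1) := by
    apply Finset.sum_nbij' (fun e => ((e.2, e.1) : Fin N × Fin N))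
      (fun e => ((e.2, e.1) : Fin N × Fin N))
    · intro e he
      simp only [hT, hT', Finset.mem_filter] at *
      exact ⟨Finset.mem_univ _, he.2.1, by rw [← hW.1]; exact he.2.2⟩
    · intro e he
      simp only [hT, hT', Finset.mem_filter] at *
      exact ⟨Finset.mem_univ _, he.2.1, by rw [← hW.1]; exact he.2.2⟩
    · intro e _; rfl
    · intro e _; rfl
    · intro e _; rfl
  rw [Finset.sum_add_distrib, ← hswap, ← Finset.sum_union hdisj]
  symm
  apply Finset.sum_subset (Finset.subset_univ _)
  intro e _ he
  by_contra hne
  obtain ⟨hne', hpos⟩ := h0 e hne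
  simp only [Finset.mem_union, hT, hT', Finset.mem_filter, Finset.mem_univ, true_and,
    not_or, not_and] at he
  rcases lt_or_gt_of_ne hne' with h | h
  · exact he.1 h hpos
  · exact he.2 h hpos

lemma quad_form (hW : IsWeightedGraph W) (x : Fin N → ℝ) (lam : ℝ)
    (heig : lap W *ᵥ x = lam • x) (hunit : x ⬝ᵥ x = 1) :
    ∑ e : Fin N × Fin N, W e.1 e.2 * (x e.1 - x e.2) ^ 2 / 2 = lam := by
  have h1 : x ⬝ᵥ (lap W *ᵥ x) = lam := by
    rw [heig, dotProduct_smul, hunit, smul_eq_mul, mul_one]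
  have h2 : x ⬝ᵥ (lap W *ᵥ x)
      = ∑ i, x i * ((∑ j, W i j) * x i - ∑ j, W i j * x j) := by
    have hdiag : ∀ i, ∑ j, Matrix.diagonal (fun i => ∑ j, W i j) i j * x j
        = (∑ j, W i j) * x i := by
      intro i
      rw [Finset.sum_eq_single i]
      · rw [Matrix.diagonal_apply_eq]
      · intro b _ hb; rw [Matrix.diagonal_apply_ne _ (Ne.symm hb), zero_mul]
      · intro h; exact absurd (Finset.mem_univ i) h
    simp only [lap, dotProduct, Matrix.mulVec, Matrix.sub_apply, sub_mul,
      Finset.sum_sub_distrib]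
    apply Finset.sum_congr rfl; intro i _
    rw [hdiag]
  have hswap : ∑ i, ∑ j, W i j * x j ^ 2 = ∑ i, ∑ j, W i j * x i ^ 2 := by
    rw [Finset.sum_comm]
    apply Finset.sum_congr rfl; intro i _
    apply Finset.sum_congr rfl; intro j _
    rw [hW.1]
  rw [Fintype.sum_prod_type, ← h1, h2]
  have expand : ∀ i j : Fin N, W i j * (x i - x j) ^ 2 / 2
      = W i j * x i ^ 2 / 2 + W i j * x j ^ 2 / 2 - W i j * (x i * x j) := by
    intro i j; ring
  calc ∑ i, ∑ j, W i j * (x i - x j) ^ 2 / 2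
      = ∑ i, ∑ j, (W i j * x i ^ 2 / 2 + W i j * x j ^ 2 / 2 - W i j * (x i * x j)) := by
        apply Finset.sum_congr rfl; intro i _
        apply Finset.sum_congr rfl; intro j _
        exact expand i j
    _ = (∑ i, ∑ j, W i j * x i ^ 2 / 2) + (∑ i, ∑ j, W i j * x j ^ 2 / 2)
          - ∑ i, ∑ j, W i j * (x i * x j) := by
        simp [Finset.sum_add_distrib, Finset.sum_sub_distrib]
    _ = (∑ i, ∑ j, W i j * x i ^ 2) - ∑ i, ∑ j, W i j * (x i * x j) := by
        have : ∑ i, ∑ j, W i j * x j ^ 2 / 2 = (∑ i, ∑ j, W i j * x j ^ 2) / 2 := by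
          simp [Finset.sum_div]
        have h' : ∑ i, ∑ j, W i j * x i ^ 2 / 2 = (∑ i, ∑ j, W i j * x i ^ 2) / 2 := by
          simp [Finset.sum_div]
        rw [this, h', hswap]; ring
    _ = ∑ i, x i * ((∑ j, W i j) * x i - ∑ j, W i j * x j) := by
        rw [← Finset.sum_sub_distrib]
        apply Finset.sum_congr rfl; intro i _
        rw [mul_sub, Finset.sum_mul, Finset.mul_sum, Finset.mul_sum,
          ← Finset.sum_sub_distrib, ← Finset.sum_sub_distrib]
        apply Finset.sum_congr rfl; intro j _
        ring

end aux2

open scoped Classical in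
/-- for a finitely supported probability distribution `μ` (support `Ω`, weights
`p`) on contracted matchings of `G`, and a unit eigenvector `x` of `L` with eigenvalue `λ > 0`,
for every `ε > 0`,
`μ({E_F : ‖Π_F^⊥ x‖₂² ≥ ε λ}) ≤ (1/(2ε)) · max_{{i,j} ∈ E} q_{ij}/W(i,j)`
(the maximum over the edges of `G` being expressed as a supremum), where `Π_F^⊥ = I − Π_F`. -/
theorem perp_norm_probability_bound {N : ℕ} (W : Matrix (Fin N) (Fin N) ℝ)
    (hW : IsWeightedGraph W)
    (Ω : Finset (Finset (Fin N × Fin N))) (p : Finset (Fin N × Fin N) → ℝ)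
    (hmatch : ∀ F ∈ Ω, IsContractedMatching W F)
    (hp : ∀ F ∈ Ω, 0 ≤ p F) (hsum : ∑ F ∈ Ω, p F = 1)
    (x : Fin N → ℝ) (lam : ℝ) (hlampos : 0 < lam)
    (heig : lap W *ᵥ x = lam • x) (hunit : x ⬝ᵥ x = 1)
    (eps : ℝ) (heps : 0 < eps) :
    (∑ F ∈ Ω.filter (fun F =>
        eps * lam ≤ ((1 - avgProj F) *ᵥ x) ⬝ᵥ ((1 - avgProj F) *ᵥ x)), p F) ≤
      (1 / (2 * eps)) * sSup { r : ℝ | ∃ i j : Fin N, i < j ∧ 0 < W i j ∧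
        r = edgeProb Ω p i j / W i j } := by
  classical
  set M := sSup { r : ℝ | ∃ i j : Fin N, i < j ∧ 0 < W i j ∧
      r = edgeProb Ω p i j / W i j } with hM
  set c : Fin N × Fin N → ℝ := fun e => (x e.1 - x e.2) ^ 2 / 2 with hc
  set nrm : Finset (Fin N × Fin N) → ℝ :=
    fun F => ((1 - avgProj F) *ᵥ x) ⬝ᵥ ((1 - avgProj F) *ᵥ x) with hnrm
  set r : (Fin N × Fin N) → ℝ := fun e => ∑ F ∈ Ω.filter (fun F => e ∈ F), p F with hr
  set T := Finset.univ.filter (fun e : Fin N × Fin N => e.1 < e.2 ∧ 0 < W e.1 e.2) with hT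
  have hc_nonneg : ∀ e, 0 ≤ c e := fun e => by rw [hc]; positivity
  have hn_nonneg : ∀ F, 0 ≤ nrm F :=
    fun F => Finset.sum_nonneg fun a _ => mul_self_nonneg _
  have hn_eq : ∀ F ∈ Ω, nrm F = ∑ e ∈ F, c e :=
    fun F hF => perp_norm_eq hW (hmatch F hF) x
  have hbdd : BddAbove { r : ℝ | ∃ i j : Fin N, i < j ∧ 0 < W i j ∧
      r = edgeProb Ω p i j / W i j } := by
    apply Set.Finite.bddAbove
    apply Set.Finite.subset (Set.finite_range
      (fun ij : Fin N × Fin N => edgeProb Ω p ij.1 ij.2 / W ij.1 ij.2))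
    rintro s ⟨i, j, _, _, rfl⟩
    exact ⟨(i, j), rfl⟩
  have hmarkov : eps * lam * (∑ F ∈ Ω.filter (fun F => eps * lam ≤ nrm F), p F)
      ≤ ∑ F ∈ Ω, p F * nrm F := by
    rw [Finset.mul_sum]
    calc ∑ F ∈ Ω.filter (fun F => eps * lam ≤ nrm F), eps * lam * p F
        ≤ ∑ F ∈ Ω.filter (fun F => eps * lam ≤ nrm F), p F * nrm F := by
          apply Finset.sum_le_sum
          intro F hF
          obtain ⟨hFΩ, hFb⟩ := Finset.mem_filter.1 hF
          rw [mul_comm]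
          exact mul_le_mul_of_nonneg_left hFb (hp F hFΩ)
      _ ≤ ∑ F ∈ Ω, p F * nrm F := by
          apply Finset.sum_le_sum_of_subset_of_nonneg (Finset.filter_subset _ _)
          intro F hF _
          exact mul_nonneg (hp F hF) (hn_nonneg F)
  have hswap : ∑ F ∈ Ω, p F * nrm F = ∑ e : Fin N × Fin N, c e * r e := by
    calc ∑ F ∈ Ω, p F * nrm F = ∑ F ∈ Ω, ∑ e ∈ F, p F * c e := by
          apply Finset.sum_congr rfl
          intro F hF
          rw [hn_eq F hF, Finset.mul_sum]
      _ = ∑ F ∈ Ω, ∑ e : Fin N × Fin N, (if e ∈ F then p F * c e else 0) := by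
          apply Finset.sum_congr rfl
          intro F _
          rw [Finset.sum_ite_mem, Finset.univ_inter]
      _ = ∑ e : Fin N × Fin N, ∑ F ∈ Ω, (if e ∈ F then p F * c e else 0) :=
          Finset.sum_comm
      _ = ∑ e : Fin N × Fin N, c e * r e := by
          apply Finset.sum_congr rfl
          intro e _
          rw [← Finset.sum_filter]
          show _ = c e * ∑ F ∈ Ω.filter (fun F => e ∈ F), p F
          rw [mul_comm, Finset.sum_mul]
  have hfold1 : ∑ e : Fin N × Fin N, c e * r e
      = ∑ e ∈ T, c e * (r e + r (e.2, e.1)) := by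
    rw [fold_sum hW (fun e => c e * r e) ?h0]
    · apply Finset.sum_congr rfl
      intro e _
      have hcs : c (e.2, e.1) = c e := by rw [hc]; ring
      show c e * r e + c (e.2, e.1) * r (e.2, e.1) = c e * (r e + r (e.2, e.1))
      rw [hcs]; ring
    case h0 =>
      intro e hne
      have hre : r e ≠ 0 := fun h => hne (show c e * r e = 0 by rw [h, mul_zero])
      have hex : ∃ F ∈ Ω, e ∈ F := by
        by_contra hcon
        push_neg at hcon
        apply hre
        have hemp : Ω.filter (fun F => e ∈ F) = ∅ :=
          Finset.filter_eq_empty_iff.2 fun {F} hF => hcon F hF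
        show ∑ F ∈ Ω.filter (fun F => e ∈ F), p F = 0
        rw [hemp, Finset.sum_empty]
      obtain ⟨F, hFΩ, heF⟩ := hex
      exact (hmatch F hFΩ).1 e heF
  have hbound : ∀ e ∈ T, r e + r (e.2, e.1) ≤ M * W e.1 e.2 := by
    intro e heT
    obtain ⟨-, hlt, hpos⟩ := Finset.mem_filter.1 heT
    have hdisj : Disjoint (Ω.filter (fun F => (e.1, e.2) ∈ F))
        (Ω.filter (fun F => (e.2, e.1) ∈ F)) := by
      rw [Finset.disjoint_left]
      intro F h1 h2
      obtain ⟨hFΩ, hm1⟩ := Finset.mem_filter.1 h1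
      obtain ⟨-, hm2⟩ := Finset.mem_filter.1 h2
      have heq := share_eq hW (hmatch F hFΩ) hm1 hm2 (Or.inr (Or.inl rfl))
      exact absurd (congrArg Prod.fst heq) (ne_of_lt hlt)
    have hqe : r e + r (e.2, e.1) = edgeProb Ω p e.1 e.2 := by
      show (∑ F ∈ Ω.filter (fun F => (e.1, e.2) ∈ F), p F)
          + (∑ F ∈ Ω.filter (fun F => (e.2, e.1) ∈ F), p F) = _
      unfold edgeProb
      rw [Finset.filter_or, Finset.sum_union hdisj]
    have hsup : edgeProb Ω p e.1 e.2 / W e.1 e.2 ≤ M :=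
      le_csSup hbdd ⟨e.1, e.2, hlt, hpos, rfl⟩
    rw [hqe]
    exact (div_le_iff₀ hpos).1 hsup
  have hquad : ∑ e ∈ T, W e.1 e.2 * c e = lam / 2 := by
    have h1 := quad_form hW x lam heig hunit
    rw [fold_sum hW (fun e => W e.1 e.2 * (x e.1 - x e.2) ^ 2 / 2) ?h0t] at h1
    case h0t =>
      intro e hne
      have hWne : W e.1 e.2 ≠ 0 := fun h =>
        hne (show W e.1 e.2 * (x e.1 - x e.2) ^ 2 / 2 = 0 by rw [h]; ring)
      refine ⟨fun h => hWne (by rw [h]; exact hW.2.2 e.2), ?_⟩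
      exact lt_of_le_of_ne (hW.2.1 e.1 e.2) (Ne.symm hWne)
    have hterm : ∀ e ∈ T, (W e.1 e.2 * (x e.1 - x e.2) ^ 2 / 2
        + W (e.2, e.1).1 (e.2, e.1).2 * (x (e.2, e.1).1 - x (e.2, e.1).2) ^ 2 / 2)
        = 2 * (W e.1 e.2 * c e) := by
      intro e _
      show W e.1 e.2 * (x e.1 - x e.2) ^ 2 / 2
          + W e.2 e.1 * (x e.2 - x e.1) ^ 2 / 2 = 2 * (W e.1 e.2 * c e)
      rw [hW.1 e.2 e.1, hc]
      ring
    rw [Finset.sum_congr rfl hterm, ← Finset.mul_sum] at h1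
    linarith
  have hfinal : eps * lam * (∑ F ∈ Ω.filter (fun F => eps * lam ≤ nrm F), p F)
      ≤ lam / 2 * M := by
    calc eps * lam * (∑ F ∈ Ω.filter (fun F => eps * lam ≤ nrm F), p F)
        ≤ ∑ F ∈ Ω, p F * nrm F := hmarkov
      _ = ∑ e : Fin N × Fin N, c e * r e := hswap
      _ = ∑ e ∈ T, c e * (r e + r (e.2, e.1)) := hfold1
      _ ≤ ∑ e ∈ T, c e * (M * W e.1 e.2) := by
          apply Finset.sum_le_sum
          intro e heT
          exact mul_le_mul_of_nonneg_left (hbound e heT) (hc_nonneg e)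
      _ = M * ∑ e ∈ T, W e.1 e.2 * c e := by
          rw [Finset.mul_sum]
          apply Finset.sum_congr rfl
          intro e _
          ring
      _ = lam / 2 * M := by rw [hquad]; ring
  have hpos2 : (0:ℝ) < eps * lam := mul_pos heps hlampos
  rw [← mul_le_mul_iff_right₀ hpos2]
  calc eps * lam * (∑ F ∈ Ω.filter (fun F => eps * lam ≤ nrm F), p F)
      ≤ lam / 2 * M := hfinal
    _ = eps * lam * (1 / (2 * eps) * M) := by field_simp
end

section
/- Let G be a connected weighted graph on N vertices with combinatorial Laplacian L, let C ∈ ℝ^{n×N} be a coarsening matrix, and let L̃ = C L Cᵀ. Let x_1 ∈ ℝ^N be the unit constant vector with all entries equal to N^{−1/2}. Then C x_1 is a unit vector satisfying L̃ (C x_1) = 0, and the kernel of L̃ is exactly the one-dimensional span of C x_1 (equivalently, 0 is a simple eigenvalue of L̃, so λ̃_1 = 0 < λ̃_2). -/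
open Matrix

/-- A coarsening matrix `C : ℝ^{n×N}`. -/
def IsCoarsening {n N : ℕ} (C : Matrix (Fin n) (Fin N) ℝ) : Prop :=
  ∃ φ : Fin N → Fin n, Function.Surjective φ ∧
    ∀ i j, C i j =
      if φ j = i then
        (Real.sqrt ((Finset.univ.filter (fun j' : Fin N => φ j' = i)).card : ℝ))⁻¹
      else 0

lemma lap_quad {N : ℕ} (W : Matrix (Fin N) (Fin N) ℝ) (hsym : ∀ i j, W i j = W j i)
    (x : Fin N → ℝ) :
    2 * (x ⬝ᵥ (lap W *ᵥ x)) = ∑ i, ∑ j, W i j * (x i - x j) ^ 2 := by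
  have hL : x ⬝ᵥ (lap W *ᵥ x) = ∑ i, ∑ j, (W i j * x i ^ 2 - W i j * x i * x j) := by
    simp only [dotProduct, lap, Matrix.sub_mulVec, Matrix.mulVec, dotProduct,
      Matrix.diagonal_apply, ite_mul, zero_mul, Finset.sum_ite_eq, Finset.mem_univ, if_true,
      Pi.sub_apply]
    refine Finset.sum_congr rfl fun i _ => ?_
    simp only [Matrix.sub_apply, Matrix.diagonal_apply, sub_mul, ite_mul, zero_mul,
      Finset.sum_sub_distrib, Finset.sum_ite_eq, Finset.mem_univ, if_true]
    rw [mul_sub, Finset.sum_mul]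
    simp only [Finset.mul_sum]
    congr 1 <;> exact Finset.sum_congr rfl fun j _ => by ring
  have key : ∀ i j, W i j * (x i - x j) ^ 2 =
      (W i j * x i ^ 2 - W i j * x i * x j) + (W i j * x j ^ 2 - W i j * x i * x j) := by
    intros; ring
  have hS : ∑ i, ∑ j, (W i j * x j ^ 2 - W i j * x i * x j)
      = ∑ i, ∑ j, (W i j * x i ^ 2 - W i j * x i * x j) := by
    rw [Finset.sum_comm]
    exact Finset.sum_congr rfl fun i _ => Finset.sum_congr rfl fun j _ => by rw [hsym]; ring
  simp_rw [key, Finset.sum_add_distrib, hS, hL]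
  ring

/-- if `G` is connected (i.e. the simple graph with adjacency `W(i,j) > 0` is
connected), `C` is a coarsening matrix, `L̃ = C L Cᵀ`, and `x₁` is the unit constant vector with
all entries `N^{-1/2}`, then `C x₁` is a unit vector with `L̃ (C x₁) = 0`, and the kernel of `L̃`
is exactly the one-dimensional span of `C x₁` (so `0` is a simple eigenvalue of `L̃`, i.e.
`λ̃₁ = 0 < λ̃₂`). -/
theorem coarsened_laplacian_kernel {n N : ℕ} (hn : n ≤ N)
    (W : Matrix (Fin N) (Fin N) ℝ) (hW : IsWeightedGraph W)
    (hconn : (SimpleGraph.fromRel (fun i j : Fin N => 0 < W i j)).Connected)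
    (C : Matrix (Fin n) (Fin N) ℝ) (hC : IsCoarsening C) :
    (C *ᵥ (fun _ => (Real.sqrt N)⁻¹)) ⬝ᵥ (C *ᵥ (fun _ => (Real.sqrt N)⁻¹)) = 1 ∧
    (C * lap W * Cᵀ) *ᵥ (C *ᵥ (fun _ => (Real.sqrt N)⁻¹)) = 0 ∧
    ∀ y : Fin n → ℝ, (C * lap W * Cᵀ) *ᵥ y = 0 ↔
      ∃ c : ℝ, y = c • (C *ᵥ (fun _ => (Real.sqrt N)⁻¹)) := by

  obtain ⟨hsym, hpos, hdiag⟩ := hW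
  obtain ⟨φ, hφ, hCd⟩ := hC
  have hN : 0 < N := Fin.pos_iff_nonempty.mpr hconn.nonempty
  have hNR : (0:ℝ) < N := by exact_mod_cast hN
  have hsN : 0 < Real.sqrt N := Real.sqrt_pos.mpr hNR
  set x₁ : Fin N → ℝ := fun _ => (Real.sqrt N)⁻¹ with hx₁
  set m : Fin n → ℝ := fun i => ((Finset.univ.filter fun j : Fin N => φ j = i).card : ℝ)
    with hm
  have hm0 : ∀ i, 0 < m i := by
    intro i
    obtain ⟨j, hj⟩ := hφ i
    have : j ∈ Finset.univ.filter fun j : Fin N => φ j = i := by simp [hj]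
    have h2 := Finset.card_pos.mpr ⟨j, this⟩
    show (0:ℝ) < ((Finset.univ.filter fun j : Fin N => φ j = i).card : ℝ)
    exact_mod_cast h2
  have hsm : ∀ i, 0 < Real.sqrt (m i) := fun i => Real.sqrt_pos.mpr (hm0 i)
  -- entries of C *ᵥ const
  have hCx : ∀ (c : ℝ) (i : Fin n), (C *ᵥ fun _ => c) i = Real.sqrt (m i) * c := by
    intro c i
    have : (C *ᵥ fun _ => c) i = ∑ j, (if φ j = i then (Real.sqrt (m i))⁻¹ * c else 0) := by
      simp only [Matrix.mulVec, dotProduct]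
      exact Finset.sum_congr rfl fun j _ => by rw [hCd i j]; split <;> simp [hm]
    rw [this, ← Finset.sum_filter, Finset.sum_const, nsmul_eq_mul]
    have hc : ((Finset.univ.filter fun a : Fin N => φ a = i).card : ℝ) = m i := rfl
    rw [hc, eq_comm, ← sub_eq_zero]
    have hs := (hsm i).ne'
    field_simp
    linear_combination c * Real.mul_self_sqrt (hm0 i).le
  -- entries of Cᵀ *ᵥ y
  have hCt : ∀ (y : Fin n → ℝ) (j : Fin N),
      (Cᵀ *ᵥ y) j = (Real.sqrt (m (φ j)))⁻¹ * y (φ j) := by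
    intro y j
    simp only [Matrix.mulVec, dotProduct, Matrix.transpose_apply]
    rw [Finset.sum_eq_single (φ j)]
    · rw [hCd (φ j) j, if_pos rfl]
    · intro i _ hi
      rw [hCd i j, if_neg (fun h => hi h.symm), zero_mul]
    · simp
  have hsumm : ∑ i, m i = N := by
    have := Finset.card_eq_sum_card_fiberwise (f := φ) (s := Finset.univ)
      (t := Finset.univ) (fun x _ => Finset.mem_univ _)
    simp only [Finset.card_univ, Fintype.card_fin] at this
    rw [hm]
    beta_reduce
    exact_mod_cast this.symm
  have hCx1 : ∀ i, (C *ᵥ x₁) i = Real.sqrt (m i) * (Real.sqrt N)⁻¹ := fun i => hCx _ i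
  -- Part 1
  have part1 : (C *ᵥ x₁) ⬝ᵥ (C *ᵥ x₁) = 1 := by
    simp only [dotProduct, hCx1]
    have : ∀ i : Fin n, (Real.sqrt (m i) * (Real.sqrt N)⁻¹) * (Real.sqrt (m i) * (Real.sqrt N)⁻¹)
        = m i / N := by
      intro i
      have h1 : Real.sqrt (m i) * Real.sqrt (m i) = m i := Real.mul_self_sqrt (hm0 i).le
      have h2 : Real.sqrt N * Real.sqrt N = (N:ℝ) := Real.mul_self_sqrt hNR.le
      rw [eq_div_iff hNR.ne', ← h1, ← h2]
      field_simp
      rw [Real.sqrt_sq (hsm i).le, Real.sqrt_sq hsN.le]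
    simp only [this, ← Finset.sum_div, hsumm, div_self (ne_of_gt hNR)]
  -- Cᵀ C x₁ = x₁
  have hCtC : Cᵀ *ᵥ (C *ᵥ x₁) = x₁ := by
    funext j
    rw [hCt, hCx1, hx₁]
    field_simp
    rw [div_self (hsm _).ne']
  have hLx1 : lap W *ᵥ x₁ = 0 := by
    funext i
    simp only [lap, Matrix.sub_mulVec, Pi.sub_apply, Matrix.mulVec, dotProduct, Pi.zero_apply,
      Matrix.sub_apply, sub_mul, Finset.sum_sub_distrib,
      Matrix.diagonal_apply, ite_mul, zero_mul, Finset.sum_ite_eq, Finset.mem_univ, if_true]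
    rw [Finset.sum_mul]
    exact sub_self _
  have part2 : (C * lap W * Cᵀ) *ᵥ (C *ᵥ x₁) = 0 := by
    rw [← Matrix.mulVec_mulVec, ← Matrix.mulVec_mulVec, hCtC, hLx1, Matrix.mulVec_zero]
  refine ⟨part1, part2, fun y => ⟨fun hy => ?_, ?_⟩⟩
  · -- forward
    set v : Fin N → ℝ := Cᵀ *ᵥ y with hv
    have hq : v ⬝ᵥ (lap W *ᵥ v) = 0 := by
      have h1 : (C * lap W * Cᵀ) *ᵥ y = C *ᵥ (lap W *ᵥ v) := by
        rw [← Matrix.mulVec_mulVec, ← Matrix.mulVec_mulVec]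
      have h2 : y ⬝ᵥ ((C * lap W * Cᵀ) *ᵥ y) = 0 := by rw [hy, dotProduct_zero]
      rw [h1, Matrix.dotProduct_mulVec, ← Matrix.mulVec_transpose] at h2
      exact h2
    have hzero : ∀ i j : Fin N, W i j * (v i - v j) ^ 2 = 0 := by
      have hsum : ∑ i, ∑ j, W i j * (v i - v j) ^ 2 = 0 := by
        rw [← lap_quad W hsym v, hq, mul_zero]
      intro i j
      have h1 := (Finset.sum_eq_zero_iff_of_nonneg (fun i _ =>
        Finset.sum_nonneg fun j _ => mul_nonneg (hpos i j) (sq_nonneg _))).mp hsum i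
        (Finset.mem_univ i)
      exact (Finset.sum_eq_zero_iff_of_nonneg (fun j _ =>
        mul_nonneg (hpos i j) (sq_nonneg _))).mp h1 j (Finset.mem_univ j)
    have hadj : ∀ i j : Fin N, (SimpleGraph.fromRel (fun i j : Fin N => 0 < W i j)).Adj i j →
        v i = v j := by
      intro i j hij
      rw [SimpleGraph.fromRel_adj] at hij
      have hWij : 0 < W i j := by
        rcases hij.2 with h | h
        · exact h
        · rw [hsym]; exact h
      have := hzero i j
      rcases mul_eq_zero.mp this with h | h
      · exact absurd h (ne_of_gt hWij)
      · have := pow_eq_zero_iff (n := 2) (by norm_num) |>.mp h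
        linarith [sub_eq_zero.mp this]
    have hwalk : ∀ {a b : Fin N},
        (SimpleGraph.fromRel (fun i j : Fin N => 0 < W i j)).Walk a b → v a = v b := by
      intro a b w
      induction w with
      | nil => rfl
      | cons h _ ih => exact (hadj _ _ h).trans ih
    have hconst : ∀ i j : Fin N, v i = v j := fun i j => (hconn i j).elim hwalk
    -- extract constant
    set j₀ : Fin N := ⟨0, hN⟩ with hj₀
    refine ⟨v j₀ * Real.sqrt N, funext fun i => ?_⟩
    obtain ⟨j, hj⟩ := hφ i
    have h1 : v j = v j₀ := hconst j j₀
    have h2 : v j = (Real.sqrt (m i))⁻¹ * y i := by rw [hv, hCt, hj]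
    have : y i = v j₀ * Real.sqrt (m i) := by
      rw [← h1, h2]
      field_simp
      rw [mul_div_assoc, div_self (hsm i).ne', mul_one]
    rw [Pi.smul_apply, hCx1, this, smul_eq_mul]
    field_simp
  · rintro ⟨c, rfl⟩
    rw [Matrix.mulVec_smul, part2, smul_zero]
end
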